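/- Let P be a finite connected poset with unfolding A_0, B_1, …, A_{m−1}, B_m from x_0, and suppose an element y lies in Up(A_{i−1}) ∩ Up(A_i) ∩ D(B_i) for some i. Then the set of elements of the zig-zag path Z(y) (the path from y to x_0 in the parent tree T) that lie in Up(A_i) forms a chain in P contained in Up(A_{i−1}), with y as its maximum element. -/

import Mathlib

section Defs
variable (α : Type*) [PartialOrder α]

/-- `L` is a linear extension of the partial order on `α`. -/
def IsLinExt (L : LinearOrder α) : Prop := ∀ x y : α, x ≤ y → L.le x y

/-- The poset `α` is the intersection of `d` linear extensions. -/
def HasRealizer (d : ℕ) : Prop :=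
  ∃ Ls : Fin d → LinearOrder α, (∀ i, IsLinExt α (Ls i)) ∧
    ∀ x y : α, (∀ i, (Ls i).le x y) → x ≤ y

/-- The order dimension of the poset `α`. -/
noncomputable def pdim : ℕ := sInf {d | HasRealizer α d}

/-- `x` and `y` are incomparable. -/
def IncompP (x y : α) : Prop := ¬ x ≤ y ∧ ¬ y ≤ x

/-- A set of (incomparable) pairs is reversible if some linear extension reverses all pairs. -/
def ReversibleSet (I : Set (α × α)) : Prop :=
  ∃ L : LinearOrder α, IsLinExt α L ∧ ∀ p ∈ I, L.lt p.2 p.1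

/-- `I` can be partitioned into `d` reversible sets. -/
def RevPart (I : Set (α × α)) (d : ℕ) : Prop :=
  ∃ J : Fin d → Set (α × α), (⋃ i, J i) = I ∧
    (∀ i j, i ≠ j → Disjoint (J i) (J j)) ∧ ∀ i, ReversibleSet α (J i)

/-- The least number of reversible sets partitioning `I` (with `revDim ∅ = 1`). -/
noncomputable def revDim (I : Set (α × α)) : ℕ := sInf {d | 0 < d ∧ RevPart α I d}

/-- Incomparable pairs `(a,b)` with `a ∈ A` and `b ∈ B`. -/
def IncPairs (A B : Set α) : Set (α × α) := {p | p.1 ∈ A ∧ p.2 ∈ B ∧ IncompP α p.1 p.2}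

noncomputable def dimAB (A B : Set α) : ℕ := revDim α (IncPairs α A B)

/-- The minimal elements of `α`. -/
def minimalSet : Set α := {x | ∀ y : α, y ≤ x → y = x}

/-- The maximal elements of `α`. -/
def maximalSet : Set α := {x | ∀ y : α, x ≤ y → y = x}

end Defs

section Unfold
variable (α : Type*) [PartialOrder α]

/-- The upset of a set. -/
def UpS (S : Set α) : Set α := {x | ∃ s ∈ S, s ≤ x}

/-- The downset of a set. -/
def DnS (S : Set α) : Set α := {x | ∃ s ∈ S, x ≤ s}

/-- The poset `α` is connected (w.r.t. its comparability/cover graph). -/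
def PosetConnected : Prop :=
  ∀ x y : α, Relation.ReflTransGen (fun u v : α => u ≤ v ∨ v ≤ u) x y

/-- Auxiliary recursion for the unfolding of `α` from starting sets `A0, B1`:
`unfoldAux A0 B1 i = ((A_i, B_{i+1}), (A_0 ∪ ⋯ ∪ A_i, B_1 ∪ ⋯ ∪ B_{i+1}))`. -/
def unfoldAux (A0 B1 : Set α) : ℕ → (Set α × Set α) × (Set α × Set α)
  | 0 => ((A0, B1), (A0, B1))
  | i + 1 =>
    let p := unfoldAux A0 B1 i
    let Ai : Set α := {a | a ∈ minimalSet α ∧ a ∉ p.2.1 ∧ ∃ b ∈ p.1.2, a ≤ b}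
    let Bi : Set α := {b | b ∈ maximalSet α ∧ b ∉ p.2.2 ∧ ∃ a ∈ Ai, a ≤ b}
    ((Ai, Bi), (p.2.1 ∪ Ai, p.2.2 ∪ Bi))

/-- The set `A_i` of the unfolding. -/
def uA (A0 B1 : Set α) (i : ℕ) : Set α := (unfoldAux α A0 B1 i).1.1

/-- The set `B_j` (for `j ≥ 1`) of the unfolding; `uB 0 = ∅` by convention. -/
def uB (A0 B1 : Set α) : ℕ → Set α
  | 0 => ∅
  | i + 1 => (unfoldAux α A0 B1 i).1.2

/-- The starting data of the unfolding of `α` from `x0 ∈ Min(α) ∪ Max(α)`. -/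
def UnfoldStart (x0 : α) (A0 B1 : Set α) : Prop :=
  (x0 ∈ minimalSet α ∧ A0 = {x0} ∧ B1 = {b | b ∈ maximalSet α ∧ x0 ≤ b}) ∨
  (x0 ∈ maximalSet α ∧ A0 = (∅ : Set α) ∧ B1 = {x0})

/-- `α(x)`: the least `i` with `x ∈ Up(A_i)`. -/
noncomputable def alphaF (A0 B1 : Set α) (x : α) : ℕ :=
  sInf {i | x ∈ UpS α (uA α A0 B1 i)}

/-- `β(x)`: the least `j ≥ 1` with `x ∈ D(B_j)`. -/
noncomputable def betaF (A0 B1 : Set α) (x : α) : ℕ :=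
  sInf {j | 1 ≤ j ∧ x ∈ DnS α (uB α A0 B1 j)}

/-- `y` is a valid parent of `x` in the unfolding. -/
def IsParentOf (A0 B1 : Set α) (x y : α) : Prop :=
  (betaF α A0 B1 x = alphaF α A0 B1 x ∧ x ⋖ y ∧
      ∃ b ∈ uB α A0 B1 (betaF α A0 B1 x), y ≤ b) ∨
  (betaF α A0 B1 x = alphaF α A0 B1 x + 1 ∧ y ⋖ x ∧
      ∃ a ∈ uA α A0 B1 (alphaF α A0 B1 x), a ≤ y)

end Unfold


/-! Along the parent path `y = z₀, z₁ = par z₀, …` the indices `α` and `β` never increase,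
so `α(z_k) ≤ i - 1` throughout. A point of `Up(A_i)` lies below no `B_j` with `1 ≤ j < i`
(its minimal lower bounds would already belong to some `A_{j'}` with `j' ≤ j`), so if
`z_m ∈ Up(A_i)` then `β(z_m) ≥ i`, hence `β(z_k) ≥ i > α(z_k)` for every `k ≤ m`. The parent
rule then forces `β(z_k) = α(z_k) + 1` and `z_{k+1} ⋖ z_k`: the path descends from `y` to
`z_m`, and at `z_m` we get `α(z_m) = i - 1`. -/

section Unfolding

variable {α : Type*} [PartialOrder α] {A0 B1 : Set α}

lemma mem_unfoldAux_snd_fst_iff {t : ℕ} {x : α} :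
    x ∈ (unfoldAux α A0 B1 t).2.1 ↔ ∃ j ≤ t, x ∈ uA α A0 B1 j := by
  induction t with
  | zero => simp [uA, unfoldAux]
  | succ t ih =>
    change x ∈ (unfoldAux α A0 B1 t).2.1 ∪ uA α A0 B1 (t + 1) ↔ _
    rw [Set.mem_union, ih]
    constructor
    · rintro (⟨j, hj, hx⟩ | hx)
      · exact ⟨j, by omega, hx⟩
      · exact ⟨t + 1, le_rfl, hx⟩
    · rintro ⟨j, hj, hx⟩
      rcases Nat.lt_or_eq_of_le hj with hj | rfl
      · exact Or.inl ⟨j, by omega, hx⟩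
      · exact Or.inr hx

lemma notMem_uA_of_lt {j k : ℕ} {x : α} (hjk : j < k) (hj : x ∈ uA α A0 B1 j) :
    x ∉ uA α A0 B1 k := by
  obtain ⟨t, rfl⟩ : ∃ t, k = t + 1 := ⟨k - 1, by omega⟩
  exact fun hk => hk.2.1 (mem_unfoldAux_snd_fst_iff.2 ⟨j, by omega, hj⟩)

lemma exists_mem_uA_of_le_mem_uB {t : ℕ} {a b : α} (ha : a ∈ minimalSet α)
    (hb : b ∈ uB α A0 B1 (t + 1)) (hab : a ≤ b) : ∃ j ≤ t + 1, a ∈ uA α A0 B1 j := by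
  by_cases h : a ∈ (unfoldAux α A0 B1 t).2.1
  · obtain ⟨j, hj, ha⟩ := mem_unfoldAux_snd_fst_iff.1 h
    exact ⟨j, by omega, ha⟩
  · exact ⟨t + 1, le_rfl, ha, h, b, hb, hab⟩

lemma notMem_upS_uA_of_mem_dnS_uB {j k : ℕ} {z : α} (hj : 1 ≤ j) (hjk : j < k)
    (hz : z ∈ DnS α (uB α A0 B1 j)) : z ∉ UpS α (uA α A0 B1 k) := by
  rintro ⟨a, ha, haz⟩
  obtain ⟨b, hb, hzb⟩ := hz
  obtain ⟨t, rfl⟩ : ∃ t, j = t + 1 := ⟨j - 1, by omega⟩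
  obtain ⟨s, rfl⟩ : ∃ s, k = s + 1 := ⟨k - 1, by omega⟩
  obtain ⟨j', hj', ha'⟩ := exists_mem_uA_of_le_mem_uB ha.1 hb (haz.trans hzb)
  exact notMem_uA_of_lt (by omega) ha' ha

lemma UnfoldStart.notMem_upS_uA {x0 : α} {a k : ℕ} (hstart : UnfoldStart α x0 A0 B1)
    (ha : x0 ∈ UpS α (uA α A0 B1 a)) (hak : a < k) : x0 ∉ UpS α (uA α A0 B1 k) := by
  rintro ⟨c, hc, hcx⟩
  rcases hstart with ⟨hmin, rfl, -⟩ | ⟨-, rfl, rfl⟩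
  · obtain rfl : c = x0 := hmin c hcx
    exact notMem_uA_of_lt (j := 0) (by omega) (Set.mem_singleton c) hc
  · obtain ⟨c', hc', -⟩ := ha
    have ha0 : a ≠ 0 := by rintro rfl; exact hc'
    exact notMem_upS_uA_of_mem_dnS_uB le_rfl (by omega) ⟨x0, Set.mem_singleton x0, le_rfl⟩
      ⟨c, hc, hcx⟩

section IndexBounds

variable {x : α}

lemma alphaF_le {i : ℕ} (h : x ∈ UpS α (uA α A0 B1 i)) : alphaF α A0 B1 x ≤ i :=
  Nat.sInf_le h

lemma mem_upS_uA_alphaF {i : ℕ} (h : x ∈ UpS α (uA α A0 B1 i)) :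
    x ∈ UpS α (uA α A0 B1 (alphaF α A0 B1 x)) :=
  Nat.sInf_mem (s := {i | x ∈ UpS α (uA α A0 B1 i)}) ⟨i, h⟩

lemma betaF_le {j : ℕ} (hj : 1 ≤ j) (h : x ∈ DnS α (uB α A0 B1 j)) : betaF α A0 B1 x ≤ j :=
  Nat.sInf_le ⟨hj, h⟩

lemma one_le_betaF {j : ℕ} (hj : 1 ≤ j) (h : x ∈ DnS α (uB α A0 B1 j)) :
    1 ≤ betaF α A0 B1 x :=
  (Nat.sInf_mem (⟨j, hj, h⟩ : {j | 1 ≤ j ∧ x ∈ DnS α (uB α A0 B1 j)}.Nonempty)).1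

lemma mem_dnS_uB_betaF {j : ℕ} (hj : 1 ≤ j) (h : x ∈ DnS α (uB α A0 B1 j)) :
    x ∈ DnS α (uB α A0 B1 (betaF α A0 B1 x)) :=
  (Nat.sInf_mem (⟨j, hj, h⟩ : {j | 1 ≤ j ∧ x ∈ DnS α (uB α A0 B1 j)}.Nonempty)).2

end IndexBounds

namespace IsParentOf

variable {x y : α} (h : IsParentOf α A0 B1 x y)
include h

lemma mem_upS_uA_alphaF {i : ℕ} (hx : x ∈ UpS α (uA α A0 B1 i)) :
    y ∈ UpS α (uA α A0 B1 (alphaF α A0 B1 x)) := by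
  rcases h with ⟨-, hxy, -⟩ | ⟨-, -, a, ha, hay⟩
  · obtain ⟨a, ha, hax⟩ := _root_.mem_upS_uA_alphaF hx
    exact ⟨a, ha, hax.trans hxy.le⟩
  · exact ⟨a, ha, hay⟩

lemma mem_dnS_uB_betaF {j : ℕ} (hj : 1 ≤ j) (hx : x ∈ DnS α (uB α A0 B1 j)) :
    y ∈ DnS α (uB α A0 B1 (betaF α A0 B1 x)) := by
  rcases h with ⟨-, -, b, hb, hyb⟩ | ⟨-, hyx, -⟩
  · exact ⟨b, hb, hyb⟩
  · obtain ⟨b, hb, hxb⟩ := _root_.mem_dnS_uB_betaF hj hx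
    exact ⟨b, hb, hyx.le.trans hxb⟩

lemma betaF_le_betaF {j : ℕ} (hj : 1 ≤ j) (hx : x ∈ DnS α (uB α A0 B1 j)) :
    betaF α A0 B1 y ≤ betaF α A0 B1 x :=
  betaF_le (one_le_betaF hj hx) (h.mem_dnS_uB_betaF hj hx)

lemma covBy_of_alphaF_lt_betaF (hlt : alphaF α A0 B1 x < betaF α A0 B1 x) :
    betaF α A0 B1 x = alphaF α A0 B1 x + 1 ∧ y ⋖ x := by
  rcases h with ⟨heq, -⟩ | ⟨heq, hyx, -⟩
  · omega
  · exact ⟨heq, hyx⟩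

end IsParentOf

section ParentPath

variable {x0 : α} {par : α → α} (hpar : ∀ x, x ≠ x0 → IsParentOf α A0 B1 x (par x))
  (hpar0 : par x0 = x0)
include hpar hpar0

lemma iterate_parent_mem_upS_dnS {p q : ℕ} (hq : 1 ≤ q) {y : α}
    (hup : y ∈ UpS α (uA α A0 B1 p)) (hdn : y ∈ DnS α (uB α A0 B1 q)) (n : ℕ) :
    (∃ a ≤ p, par^[n] y ∈ UpS α (uA α A0 B1 a)) ∧
      ∃ b, 1 ≤ b ∧ par^[n] y ∈ DnS α (uB α A0 B1 b) := by
  induction n with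
  | zero => exact ⟨⟨p, le_rfl, hup⟩, q, hq, hdn⟩
  | succ n ih =>
    rw [Function.iterate_succ_apply']
    rcases eq_or_ne (par^[n] y) x0 with hx0 | hx0
    · rwa [hx0, hpar0, ← hx0]
    obtain ⟨⟨a, hap, ha⟩, b, hb, hdn⟩ := ih
    exact ⟨⟨_, (alphaF_le ha).trans hap, (hpar _ hx0).mem_upS_uA_alphaF ha⟩,
      _, one_le_betaF hb hdn, (hpar _ hx0).mem_dnS_uB_betaF hb hdn⟩

lemma iterate_parent_le_of_mem_upS_uA (hstart : UnfoldStart α x0 A0 B1) {i : ℕ} (hi : 1 ≤ i)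
    {y : α} (hup : y ∈ UpS α (uA α A0 B1 (i - 1))) (hdn : y ∈ DnS α (uB α A0 B1 i))
    {m : ℕ} (hm : par^[m] y ∈ UpS α (uA α A0 B1 i)) :
    par^[m] y ∈ UpS α (uA α A0 B1 (i - 1)) ∧ ∀ k ≤ m, par^[m] y ≤ par^[k] y := by
  have bands := iterate_parent_mem_upS_dnS hpar hpar0 hi hup hdn
  have hne : ∀ k ≤ m, par^[k] y ≠ x0 := by
    intro k hk hk0
    obtain ⟨⟨a, ha, hmem⟩, -⟩ := bands k
    rw [hk0] at hmem
    refine hstart.notMem_upS_uA hmem (by omega : a < i) ?_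
    rwa [← Nat.sub_add_cancel hk, Function.iterate_add_apply, hk0,
      Function.iterate_fixed hpar0] at hm
  have hβ : ∀ k ≤ m, i ≤ betaF α A0 B1 (par^[k] y) := by
    intro k hk
    induction hk using Nat.decreasingInduction with
    | self =>
      obtain ⟨-, b, hb, hdn⟩ := bands m
      by_contra! hlt
      exact notMem_upS_uA_of_mem_dnS_uB (one_le_betaF hb hdn) hlt (mem_dnS_uB_betaF hb hdn) hm
    | of_succ k hk ih =>
      obtain ⟨-, b, hb, hdn⟩ := bands k
      rw [Function.iterate_succ_apply'] at ih
      exact ih.trans ((hpar _ (hne k hk.le)).betaF_le_betaF hb hdn)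
  have hstep : ∀ k ≤ m, betaF α A0 B1 (par^[k] y) = alphaF α A0 B1 (par^[k] y) + 1 ∧
      par^[k + 1] y ⋖ par^[k] y := by
    intro k hk
    obtain ⟨⟨_, hle, hmem⟩, -⟩ := bands k
    rw [Function.iterate_succ_apply']
    exact (hpar _ (hne k hk)).covBy_of_alphaF_lt_betaF
      (by have := alphaF_le hmem; have := hβ k hk; omega)
  refine ⟨?_, fun k hk => ?_⟩
  · obtain ⟨⟨_, hle, hmem⟩, -⟩ := bands m
    have hαm : alphaF α A0 B1 (par^[m] y) = i - 1 := by
      have := alphaF_le hmem; have := hβ m le_rfl; have := (hstep m le_rfl).1; omega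
    exact hαm ▸ mem_upS_uA_alphaF hmem
  · induction hk using Nat.decreasingInduction with
    | self => exact le_rfl
    | of_succ k hk ih => exact ih.trans (hstep k hk.le).2.le

end ParentPath

end Unfolding

theorem stmt19_general {α : Type*} [PartialOrder α]
    (x0 : α) (A0 B1 : Set α) (hstart : UnfoldStart α x0 A0 B1)
    (par : α → α) (hpar : ∀ x : α, x ≠ x0 → IsParentOf α A0 B1 x (par x))
    (hpar0 : par x0 = x0)
    (i : ℕ) (hi : 1 ≤ i) (y : α)
    (hy1 : y ∈ UpS α (uA α A0 B1 (i - 1)))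
    (hy2 : y ∈ UpS α (uA α A0 B1 i))
    (hy3 : y ∈ DnS α (uB α A0 B1 i)) :
    IsChain (· ≤ ·) ({z | (∃ n : ℕ, par^[n] y = z) ∧ z ∈ UpS α (uA α A0 B1 i)} : Set α) ∧
    ({z | (∃ n : ℕ, par^[n] y = z) ∧ z ∈ UpS α (uA α A0 B1 i)} : Set α)
      ⊆ UpS α (uA α A0 B1 (i - 1)) ∧
    y ∈ ({z | (∃ n : ℕ, par^[n] y = z) ∧ z ∈ UpS α (uA α A0 B1 i)} : Set α) ∧
    ∀ z ∈ ({z | (∃ n : ℕ, par^[n] y = z) ∧ z ∈ UpS α (uA α A0 B1 i)} : Set α), z ≤ y := by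
  have key {m : ℕ} (hm : par^[m] y ∈ UpS α (uA α A0 B1 i)) :=
    iterate_parent_le_of_mem_upS_uA hpar hpar0 hstart hi hy1 hy3 hm
  refine ⟨?_, ?_, ⟨⟨0, rfl⟩, hy2⟩, ?_⟩
  · rintro _ ⟨⟨n, rfl⟩, hn⟩ _ ⟨⟨n', rfl⟩, hn'⟩ -
    rcases le_total n n' with h | h
    · exact Or.inr ((key hn').2 n h)
    · exact Or.inl ((key hn).2 n' h)
  · rintro _ ⟨⟨n, rfl⟩, hn⟩
    exact (key hn).1
  · rintro _ ⟨⟨n, rfl⟩, hn⟩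
    exact (key hn).2 0 n.zero_le

/-- if `y ∈ Up(A_{i-1}) ∩ Up(A_i) ∩ D(B_i)` then the elements of the
zig-zag path of `y` (the iterated parents of `y`, i.e. the path from `y` to `x0` in the
parent tree) that lie in `Up(A_i)` form a chain contained in `Up(A_{i-1})` whose
maximum element is `y`. -/
theorem stmt19 {α : Type*} [Fintype α] [PartialOrder α] [Nontrivial α]
    (hconn : PosetConnected α)
    (x0 : α) (A0 B1 : Set α) (hstart : UnfoldStart α x0 A0 B1)
    (par : α → α) (hpar : ∀ x : α, x ≠ x0 → IsParentOf α A0 B1 x (par x))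
    (hpar0 : par x0 = x0)
    (i : ℕ) (hi : 1 ≤ i) (y : α)
    (hy1 : y ∈ UpS α (uA α A0 B1 (i - 1)))
    (hy2 : y ∈ UpS α (uA α A0 B1 i))
    (hy3 : y ∈ DnS α (uB α A0 B1 i)) :
    IsChain (· ≤ ·) ({z | (∃ n : ℕ, par^[n] y = z) ∧ z ∈ UpS α (uA α A0 B1 i)} : Set α) ∧
    ({z | (∃ n : ℕ, par^[n] y = z) ∧ z ∈ UpS α (uA α A0 B1 i)} : Set α)
      ⊆ UpS α (uA α A0 B1 (i - 1)) ∧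
    y ∈ ({z | (∃ n : ℕ, par^[n] y = z) ∧ z ∈ UpS α (uA α A0 B1 i)} : Set α) ∧
    ∀ z ∈ ({z | (∃ n : ℕ, par^[n] y = z) ∧ z ∈ UpS α (uA α A0 B1 i)} : Set α), z ≤ y :=
  stmt19_general x0 A0 B1 hstart par hpar hpar0 i hi y hy1 hy2 hy3
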